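/- Let P_s be a sign pattern on n nodes and let V_C ⊆ V be simultaneously a signed zero forcing set, a positive signed zero forcing set, and a negative signed zero forcing set of P_s. Let A ∈ Q_s(P_s) be a matrix all of whose (complex) eigenvalues are real. Then for every λ ∈ ℂ and every nonzero w ∈ ℂ^n with w^T A = λ w^T, there exists j ∈ V_C with w_j ≠ 0; that is, by the PBH test, the pair (A, B) with B having columns e_j for j ∈ V_C is controllable. -/

import Mathlib

/-- An entry of a sign pattern: `+`, `-`, `0`, or `?` (unrestricted). -/
inductive SignPatEntry : Type
  | pos | neg | zero | unk
deriving DecidableEq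

namespace SignPatEntry

/-- Sign inversion: `inv(+) = -`, `inv(-) = +`. -/
def inv : SignPatEntry → SignPatEntry
  | pos => neg
  | neg => pos
  | zero => zero
  | unk => unk

/-- Product of signs (used as `s · P(u,v)`). -/
def mul : SignPatEntry → SignPatEntry → SignPatEntry
  | pos, y => y
  | neg, y => y.inv
  | zero, _ => zero
  | unk, _ => unk

end SignPatEntry

/-- A real number matches a sign-pattern entry. -/
def matchesSign : SignPatEntry → ℝ → Prop
  | .pos, a => 0 < a
  | .neg, a => a < 0
  | .zero, a => a = 0
  | .unk, _ => True

/-- The qualitative class of a sign pattern: real matrices whose entries have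
the prescribed signs. -/
def QClass {n : ℕ} (P : Fin n → Fin n → SignPatEntry)
    (A : Matrix (Fin n) (Fin n) ℝ) : Prop :=
  ∀ i j : Fin n, matchesSign (P i j) (A i j)

/-- A configuration of the signing-and-coloring game: a set of black nodes and a
partial marking of nodes with signs. -/
structure Config (n : ℕ) where
  black : Finset (Fin n)
  mark : Fin n → Option SignPatEntry

/-- The set of white out-neighbors of `v` (out-neighbors of `v` are the `u` with
`P u v ≠ 0`). -/
def Wset {n : ℕ} (P : Fin n → Fin n → SignPatEntry) (c : Config n) (v : Fin n) :
    Finset (Fin n) :=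
  Finset.univ.filter (fun u => u ∉ c.black ∧ P u v ≠ SignPatEntry.zero)

/-- One step of the signing and coloring rule, played on the pattern `P`. -/
inductive Step {n : ℕ} (P : Fin n → Fin n → SignPatEntry) : Config n → Config n → Prop
  /-- (1) a pivot node `v` with a single white out-neighbor `u` forces `u` black. -/
  | force1 (c : Config n) (v u : Fin n)
      (hv : v ∈ c.black ∨ P v v ≠ SignPatEntry.unk)
      (hW : Wset P c v = {u}) :
      Step P c ⟨insert u c.black, c.mark⟩
  /-- (2) if all white out-neighbors of a pivot `v` are marked consistently
  (all with `m(u) = P(u,v)` or all with `m(u) = -P(u,v)`), they all become black. -/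
  | force2 (c : Config n) (v : Fin n)
      (hv : v ∈ c.black ∨ P v v ≠ SignPatEntry.unk)
      (hall : (∀ u ∈ Wset P c v, c.mark u = some (P u v)) ∨
              (∀ u ∈ Wset P c v, c.mark u = some (P u v).inv)) :
      Step P c ⟨c.black ∪ Wset P c v, c.mark⟩
  /-- (3) if exactly one white out-neighbor `w` of a pivot `v` is unmarked, at least one
  is marked, and every marked one satisfies `m(u) = s · P(u,v)`, then `w` gets
  marked with `-s · P(w,v)`. -/
  | force3 (c : Config n) (v w : Fin n) (s : SignPatEntry)
      (hv : v ∈ c.black ∨ P v v ≠ SignPatEntry.unk)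
      (hs : s = SignPatEntry.pos ∨ s = SignPatEntry.neg)
      (hw : w ∈ Wset P c v) (hwnone : c.mark w = none)
      (hmarked : ∀ u ∈ Wset P c v, u ≠ w → c.mark u = some (s.mul (P u v)))
      (hex : ∃ u ∈ Wset P c v, u ≠ w) :
      Step P c ⟨c.black, Function.update c.mark w (some (s.inv.mul (P w v)))⟩
  /-- (4) if no white node is marked, an arbitrary white node may be marked `+`. -/
  | force4 (c : Config n) (u : Fin n)
      (hnomark : ∀ x : Fin n, x ∉ c.black → c.mark x = none)
      (hu : u ∉ c.black) :
      Step P c ⟨c.black, Function.update c.mark u (some SignPatEntry.pos)⟩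

/-- The initial configuration: black set `Z`, no marks. -/
def initConfig {n : ℕ} (Z : Finset (Fin n)) : Config n := ⟨Z, fun _ => none⟩

/-- `Z` is a signed zero forcing set of the pattern `P`. -/
def SignedZFS {n : ℕ} (P : Fin n → Fin n → SignPatEntry) (Z : Finset (Fin n)) : Prop :=
  ∃ c : Config n, Relation.ReflTransGen (Step P) (initConfig Z) c ∧ c.black = Finset.univ

/-- The negative looped pattern `P⁻`: off-diagonal as `P`; diagonal `-` if
`P i i ∈ {0,-}`, and `?` if `P i i ∈ {+,?}`. -/
def negLooped {n : ℕ} (P : Fin n → Fin n → SignPatEntry) :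
    Fin n → Fin n → SignPatEntry := fun i j =>
  if i = j then
    (match P i i with
      | SignPatEntry.zero => SignPatEntry.neg
      | SignPatEntry.neg => SignPatEntry.neg
      | _ => SignPatEntry.unk)
  else P i j

/-- The positive looped pattern `P⁺`: off-diagonal as `P`; diagonal `+` if
`P i i ∈ {0,+}`, and `?` if `P i i ∈ {-,?}`. -/
def posLooped {n : ℕ} (P : Fin n → Fin n → SignPatEntry) :
    Fin n → Fin n → SignPatEntry := fun i j =>
  if i = j then
    (match P i i with
      | SignPatEntry.zero => SignPatEntry.pos
      | SignPatEntry.pos => SignPatEntry.pos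
      | _ => SignPatEntry.unk)
  else P i j

/-- The sign of a real number, as a sign-pattern entry. -/
noncomputable def sgnR (x : ℝ) : SignPatEntry :=
  if 0 < x then SignPatEntry.pos else if x < 0 then SignPatEntry.neg else SignPatEntry.zero

namespace Stmt6Aux

open Finset

variable {n : ℕ}

/-- The soundness invariant for the signing-and-coloring game relative to a real
vector `x`: black nodes carry zero entries, and there is a global sign flip `ε`
such that every mark is `+`/`-` and records the sign of `ε * x u` (or `x u = 0`). -/
def Valid (x : Fin n → ℝ) (c : Config n) : Prop :=
  (∀ j ∈ c.black, x j = 0) ∧ ∃ ε : ℝ, (ε = 1 ∨ ε = -1) ∧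
    ∀ u s, c.mark u = some s →
      (s = SignPatEntry.pos ∨ s = SignPatEntry.neg) ∧
      (x u = 0 ∨ matchesSign s (ε * x u))

lemma sum_Wset (P : Fin n → Fin n → SignPatEntry) (B : Matrix (Fin n) (Fin n) ℝ)
    (hB : ∀ i j, matchesSign (P i j) (B i j)) (x : Fin n → ℝ)
    (hx : Matrix.vecMul x B = 0) (c : Config n) (hblack : ∀ j ∈ c.black, x j = 0)
    (v : Fin n) : ∑ u ∈ Wset P c v, x u * B u v = 0 := by
  have h0 : ∑ u, x u * B u v = 0 := by
    have := congrFun hx v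
    simpa [Matrix.vecMul, dotProduct] using this
  rw [← h0]
  refine Finset.sum_subset (Finset.subset_univ _) (fun u _ hu => ?_)
  simp only [Wset, Finset.mem_filter, Finset.mem_univ, true_and, not_and_or, not_not] at hu
  rcases hu with h | h
  · rw [hblack u h, zero_mul]
  · have : matchesSign SignPatEntry.zero (B u v) := h ▸ hB u v
    rw [show B u v = 0 from this, mul_zero]

lemma Wset_entry (P : Fin n → Fin n → SignPatEntry)
    (hP : ∀ i j : Fin n, i ≠ j → P i j ≠ SignPatEntry.unk) (c : Config n) (v : Fin n)
    (hv : v ∈ c.black ∨ P v v ≠ SignPatEntry.unk) {u : Fin n} (hu : u ∈ Wset P c v) :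
    P u v = SignPatEntry.pos ∨ P u v = SignPatEntry.neg := by
  simp only [Wset, Finset.mem_filter, Finset.mem_univ, true_and] at hu
  obtain ⟨hub, hunz⟩ := hu
  have hunk : P u v ≠ SignPatEntry.unk := by
    rcases eq_or_ne u v with rfl | hne
    · rcases hv with h | h
      · exact absurd h hub
      · exact h
    · exact hP u v hne
  cases h : P u v <;> simp_all

lemma sign_prod (e : SignPatEntry) (he : e = SignPatEntry.pos ∨ e = SignPatEntry.neg)
    (b z : ℝ) (hb : matchesSign e b) (hz : z = 0 ∨ matchesSign e z) :
    0 ≤ z * b ∧ (z * b = 0 → z = 0) := by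
  rcases hz with rfl | hz
  · simp
  rcases he with rfl | rfl <;> simp only [matchesSign] at hb hz ⊢ <;>
    constructor <;> intros <;> nlinarith

lemma sign_prod_inv (e : SignPatEntry) (he : e = SignPatEntry.pos ∨ e = SignPatEntry.neg)
    (b z : ℝ) (hb : matchesSign e b) (hz : z = 0 ∨ matchesSign e.inv z) :
    z * b ≤ 0 ∧ (z * b = 0 → z = 0) := by
  rcases hz with rfl | hz
  · simp
  rcases he with rfl | rfl <;> simp only [matchesSign, SignPatEntry.inv] at hb hz ⊢ <;>
    constructor <;> intros <;> nlinarith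

lemma sign_conc (e : SignPatEntry) (he : e = SignPatEntry.pos ∨ e = SignPatEntry.neg)
    (b z : ℝ) (hb : matchesSign e b) (hz : z ≠ 0) (h : z * b ≤ 0) :
    matchesSign e.inv z := by
  rcases he with rfl | rfl <;>
    simp only [matchesSign, SignPatEntry.inv] at hb ⊢ <;>
    rcases lt_trichotomy z 0 with h' | h' | h' <;> first | assumption | (exfalso; first | exact hz h' | nlinarith)

lemma sign_conc' (e : SignPatEntry) (he : e = SignPatEntry.pos ∨ e = SignPatEntry.neg)
    (b z : ℝ) (hb : matchesSign e b) (hz : z ≠ 0) (h : 0 ≤ z * b) :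
    matchesSign e z := by
  rcases he with rfl | rfl <;>
    simp only [matchesSign] at hb ⊢ <;>
    rcases lt_trichotomy z 0 with h' | h' | h' <;> first | assumption | (exfalso; first | exact hz h' | nlinarith)

lemma valid_step (P : Fin n → Fin n → SignPatEntry)
    (hP : ∀ i j : Fin n, i ≠ j → P i j ≠ SignPatEntry.unk)
    (B : Matrix (Fin n) (Fin n) ℝ) (hB : ∀ i j, matchesSign (P i j) (B i j))
    (x : Fin n → ℝ) (hx : Matrix.vecMul x B = 0)
    {c c' : Config n} (hstep : Step P c c') (hc : Valid x c) : Valid x c' := by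
  obtain ⟨hblack, ε, hε, hmark⟩ := hc
  have hε0 : ε ≠ 0 := by rcases hε with rfl | rfl <;> norm_num
  have hεx : ∀ u : Fin n, ε * x u = 0 → x u = 0 := fun u h =>
    (mul_eq_zero.mp h).resolve_left hε0
  cases hstep with
  | force1 v u hv hW =>
      refine ⟨?_, ε, hε, hmark⟩
      intro j hj
      rcases Finset.mem_insert.mp hj with rfl | hj
      · have hsum := sum_Wset P B hB x hx c hblack v
        rw [hW, Finset.sum_singleton] at hsum
        have hjW : j ∈ Wset P c v := by rw [hW]; exact Finset.mem_singleton_self j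
        have he := Wset_entry P hP c v hv hjW
        have hBne : B j v ≠ 0 := by
          rcases he with he | he <;> have := hB j v <;> rw [he] at this <;>
            simp only [matchesSign] at this <;> intro h0 <;> rw [h0] at this <;> linarith
        exact (mul_eq_zero.mp hsum).resolve_right hBne
      · exact hblack j hj
  | force2 v hv hall =>
      refine ⟨?_, ε, hε, hmark⟩
      intro j hj
      rcases Finset.mem_union.mp hj with hj | hj
      · exact hblack j hj
      have hsum := sum_Wset P B hB x hx c hblack v
      rcases hall with hall | hall
      · -- all marks agree with P u v : terms ε*x u*B u v are nonneg and sum to 0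
        have key : ∀ u ∈ Wset P c v, 0 ≤ (ε * x u) * B u v ∧
            ((ε * x u) * B u v = 0 → x u = 0) := by
          intro u hu
          have he := Wset_entry P hP c v hv hu
          obtain ⟨-, hz⟩ := hmark u _ (hall u hu)
          have hz' : ε * x u = 0 ∨ matchesSign (P u v) (ε * x u) := by
            rcases hz with h | h
            · exact Or.inl (by rw [h, mul_zero])
            · exact Or.inr h
          obtain ⟨h1, h2⟩ := sign_prod (P u v) he (B u v) (ε * x u) (hB u v) hz'
          exact ⟨h1, fun h => hεx u (h2 h)⟩
        have hsum' : ∑ u ∈ Wset P c v, (ε * x u) * B u v = 0 := by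
          have : ∑ u ∈ Wset P c v, (ε * x u) * B u v
              = ε * ∑ u ∈ Wset P c v, x u * B u v := by
            rw [Finset.mul_sum]; apply Finset.sum_congr rfl; intros; ring
          rw [this, hsum, mul_zero]
        have := (Finset.sum_eq_zero_iff_of_nonneg (fun u hu => (key u hu).1)).mp hsum'
        exact (key j hj).2 (this j hj)
      · have key : ∀ u ∈ Wset P c v, (ε * x u) * B u v ≤ 0 ∧
            ((ε * x u) * B u v = 0 → x u = 0) := by
          intro u hu
          have he := Wset_entry P hP c v hv hu
          obtain ⟨-, hz⟩ := hmark u _ (hall u hu)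
          have hz' : ε * x u = 0 ∨ matchesSign (P u v).inv (ε * x u) := by
            rcases hz with h | h
            · exact Or.inl (by rw [h, mul_zero])
            · exact Or.inr h
          obtain ⟨h1, h2⟩ := sign_prod_inv (P u v) he (B u v) (ε * x u) (hB u v) hz'
          exact ⟨h1, fun h => hεx u (h2 h)⟩
        have hsum' : ∑ u ∈ Wset P c v, (ε * x u) * B u v = 0 := by
          have : ∑ u ∈ Wset P c v, (ε * x u) * B u v
              = ε * ∑ u ∈ Wset P c v, x u * B u v := by
            rw [Finset.mul_sum]; apply Finset.sum_congr rfl; intros; ring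
          rw [this, hsum, mul_zero]
        have := (Finset.sum_eq_zero_iff_of_nonpos (fun u hu => (key u hu).1)).mp hsum'
        exact (key j hj).2 (this j hj)
  | force3 v w s hv hs hw hwnone hmarked hex =>
      refine ⟨hblack, ε, hε, ?_⟩
      intro u t hut
      have hut' : Function.update c.mark w (some (SignPatEntry.mul s.inv (P w v))) u
          = some t := hut
      obtain h | hne := eq_or_ne u w
      · subst h
        rw [Function.update_self] at hut'
        injection hut' with hut'
        subst hut'
        have hew := Wset_entry P hP c v hv hw
        have hmarkpn : SignPatEntry.mul s.inv (P u v) = SignPatEntry.pos ∨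
            SignPatEntry.mul s.inv (P u v) = SignPatEntry.neg := by
          rcases hs with rfl | rfl <;> rcases hew with h | h <;> rw [h] <;>
            simp [SignPatEntry.inv, SignPatEntry.mul]
        refine ⟨hmarkpn, ?_⟩
        by_cases hxw : x u = 0
        · exact Or.inl hxw
        right
        have hsum := sum_Wset P B hB x hx c hblack v
        rw [← Finset.add_sum_erase _ _ hw] at hsum
        have hz0 : ε * x u ≠ 0 := fun h => hxw (hεx u h)
        rcases hs with rfl | rfl
        · -- s = pos : marked terms nonneg, u-term nonpos
          have hrest : 0 ≤ ∑ a ∈ (Wset P c v).erase u, (ε * x a) * B a v := by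
            apply Finset.sum_nonneg
            intro a ha
            have haW := Finset.mem_of_mem_erase ha
            have hanw := Finset.ne_of_mem_erase ha
            have he := Wset_entry P hP c v hv haW
            have hma := hmarked a haW hanw
            have : SignPatEntry.mul SignPatEntry.pos (P a v) = P a v := rfl
            rw [this] at hma
            obtain ⟨-, hz⟩ := hmark a _ hma
            have hz' : ε * x a = 0 ∨ matchesSign (P a v) (ε * x a) := by
              rcases hz with h | h
              · exact Or.inl (by rw [h, mul_zero])
              · exact Or.inr h
            exact (sign_prod (P a v) he (B a v) (ε * x a) (hB a v) hz').1
          have hwterm : (ε * x u) * B u v ≤ 0 := by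
            have hE : (ε * x u) * B u v + ∑ a ∈ (Wset P c v).erase u, (ε * x a) * B a v
                = ε * (x u * B u v + ∑ a ∈ (Wset P c v).erase u, x a * B a v) := by
              rw [mul_add, Finset.mul_sum]; congr 1; · ring
              · apply Finset.sum_congr rfl; intros; ring
            rw [hsum, mul_zero] at hE
            linarith
          have := sign_conc (P u v) hew (B u v) (ε * x u) (hB u v) hz0 hwterm
          simpa [SignPatEntry.inv, SignPatEntry.mul] using this
        · -- s = neg : marked terms nonpos, u-term nonneg
          have hrest : ∑ a ∈ (Wset P c v).erase u, (ε * x a) * B a v ≤ 0 := by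
            apply Finset.sum_nonpos
            intro a ha
            have haW := Finset.mem_of_mem_erase ha
            have hanw := Finset.ne_of_mem_erase ha
            have he := Wset_entry P hP c v hv haW
            have hma := hmarked a haW hanw
            have : SignPatEntry.mul SignPatEntry.neg (P a v) = (P a v).inv := rfl
            rw [this] at hma
            obtain ⟨-, hz⟩ := hmark a _ hma
            have hz' : ε * x a = 0 ∨ matchesSign (P a v).inv (ε * x a) := by
              rcases hz with h | h
              · exact Or.inl (by rw [h, mul_zero])
              · exact Or.inr h
            exact (sign_prod_inv (P a v) he (B a v) (ε * x a) (hB a v) hz').1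
          have hwterm : 0 ≤ (ε * x u) * B u v := by
            have hE : (ε * x u) * B u v + ∑ a ∈ (Wset P c v).erase u, (ε * x a) * B a v
                = ε * (x u * B u v + ∑ a ∈ (Wset P c v).erase u, x a * B a v) := by
              rw [mul_add, Finset.mul_sum]; congr 1; · ring
              · apply Finset.sum_congr rfl; intros; ring
            rw [hsum, mul_zero] at hE
            linarith
          have := sign_conc' (P u v) hew (B u v) (ε * x u) (hB u v) hz0 hwterm
          have hmm : SignPatEntry.mul (SignPatEntry.inv SignPatEntry.neg) (P u v) = P u v := rfl
          rw [hmm]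
          exact this
      · rw [Function.update_of_ne hne] at hut'
        exact hmark u t hut'
  | force4 u hnomark hu =>
      refine ⟨hblack, if 0 ≤ x u then 1 else -1, by split <;> simp, ?_⟩
      intro v t hvt
      have hvt' : Function.update c.mark u (some SignPatEntry.pos) v = some t := hvt
      obtain h | hne := eq_or_ne v u
      · subst h
        rw [Function.update_self] at hvt'
        injection hvt' with hvt'
        subst hvt'
        refine ⟨Or.inl rfl, ?_⟩
        rcases lt_trichotomy (x v) 0 with h | h | h
        · right; simp only [matchesSign]; rw [if_neg (not_le.mpr h)]; nlinarith
        · exact Or.inl h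
        · right; simp only [matchesSign]; rw [if_pos h.le]; nlinarith
      · rw [Function.update_of_ne hne] at hvt'
        have hvb : v ∈ c.black := by
          by_contra hvb
          rw [hnomark v hvb] at hvt'
          exact Option.some_ne_none t hvt'.symm
        exact ⟨(hmark v t hvt').1, Or.inl (hblack v hvb)⟩

lemma zfs_zero (P : Fin n → Fin n → SignPatEntry)
    (hP : ∀ i j : Fin n, i ≠ j → P i j ≠ SignPatEntry.unk)
    (B : Matrix (Fin n) (Fin n) ℝ) (hB : ∀ i j, matchesSign (P i j) (B i j))
    (Z : Finset (Fin n)) (hZ : SignedZFS P Z)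
    (x : Fin n → ℝ) (hx : Matrix.vecMul x B = 0)
    (hxZ : ∀ j ∈ Z, x j = 0) : x = 0 := by
  obtain ⟨c, hreach, hbl⟩ := hZ
  have hval : Valid x c := by
    clear hbl
    induction hreach with
    | refl => exact ⟨hxZ, 1, Or.inl rfl, fun u s h => by simp [initConfig] at h⟩
    | tail _ hstep ih => exact valid_step P hP B hB x hx hstep ih
  funext j
  exact hval.1 j (hbl ▸ Finset.mem_univ j)

end Stmt6Aux

namespace Stmt6Aux

variable {n : ℕ}

lemma residual_match_zero (P : Fin n → Fin n → SignPatEntry) (A : Matrix (Fin n) (Fin n) ℝ)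
    (hA : QClass P A) (lr : ℝ) (hlr : lr = 0) :
    ∀ i j, matchesSign (P i j) ((A - lr • (1 : Matrix (Fin n) (Fin n) ℝ)) i j) := by
  subst hlr
  intro i j
  simpa using hA i j

lemma residual_match_neg (P : Fin n → Fin n → SignPatEntry) (A : Matrix (Fin n) (Fin n) ℝ)
    (hA : QClass P A) (lr : ℝ) (hlr : 0 < lr) :
    ∀ i j, matchesSign (negLooped P i j) ((A - lr • (1 : Matrix (Fin n) (Fin n) ℝ)) i j) := by
  intro i j
  have hAij := hA i j
  by_cases h : i = j
  · subst h
    have hb : (A - lr • (1 : Matrix (Fin n) (Fin n) ℝ)) i i = A i i - lr := by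
      simp [Matrix.sub_apply, Matrix.one_apply_eq]
    rw [hb]
    unfold negLooped
    rw [if_pos rfl]
    cases hPe : P i i <;> rw [hPe] at hAij <;>
      simp only [matchesSign] at hAij ⊢ <;> first | trivial | linarith
  · simp only [negLooped, if_neg h, Matrix.sub_apply, Matrix.smul_apply, Matrix.one_apply_ne h,
      smul_eq_mul, mul_zero, sub_zero]
    exact hAij

lemma residual_match_pos (P : Fin n → Fin n → SignPatEntry) (A : Matrix (Fin n) (Fin n) ℝ)
    (hA : QClass P A) (lr : ℝ) (hlr : lr < 0) :
    ∀ i j, matchesSign (posLooped P i j) ((A - lr • (1 : Matrix (Fin n) (Fin n) ℝ)) i j) := by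
  intro i j
  have hAij := hA i j
  by_cases h : i = j
  · subst h
    have hb : (A - lr • (1 : Matrix (Fin n) (Fin n) ℝ)) i i = A i i - lr := by
      simp [Matrix.sub_apply, Matrix.one_apply_eq]
    rw [hb]
    unfold posLooped
    rw [if_pos rfl]
    cases hPe : P i i <;> rw [hPe] at hAij <;>
      simp only [matchesSign] at hAij ⊢ <;> first | trivial | linarith
  · simp only [posLooped, if_neg h, Matrix.sub_apply, Matrix.smul_apply, Matrix.one_apply_ne h,
      smul_eq_mul, mul_zero, sub_zero]
    exact hAij

lemma negLooped_offdiag (P : Fin n → Fin n → SignPatEntry)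
    (hP : ∀ i j : Fin n, i ≠ j → P i j ≠ SignPatEntry.unk) :
    ∀ i j : Fin n, i ≠ j → negLooped P i j ≠ SignPatEntry.unk := by
  intro i j hij
  simpa [negLooped, if_neg hij] using hP i j hij

lemma posLooped_offdiag (P : Fin n → Fin n → SignPatEntry)
    (hP : ∀ i j : Fin n, i ≠ j → P i j ≠ SignPatEntry.unk) :
    ∀ i j : Fin n, i ≠ j → posLooped P i j ≠ SignPatEntry.unk := by
  intro i j hij
  simpa [posLooped, if_neg hij] using hP i j hij

end Stmt6Aux

theorem stmt6' {n : ℕ} (P : Fin n → Fin n → SignPatEntry)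
    (hP : ∀ i j : Fin n, i ≠ j → P i j ≠ SignPatEntry.unk)
    (VC : Finset (Fin n))
    (hVC0 : SignedZFS P VC)
    (hVCpos : SignedZFS (negLooped P) VC)
    (hVCneg : SignedZFS (posLooped P) VC)
    (A : Matrix (Fin n) (Fin n) ℝ) (hA : QClass P A)
    (hreal : ∀ μ ∈ spectrum ℂ (A.map (Complex.ofReal ·)), μ.im = 0) :
    ∀ (lam : ℂ) (w : Fin n → ℂ), w ≠ 0 →
      Matrix.vecMul w (A.map (Complex.ofReal ·)) = lam • w →
      ∃ j ∈ VC, w j ≠ 0 := by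
  intro lam w hw heig
  by_contra hcon
  push_neg at hcon
  set M : Matrix (Fin n) (Fin n) ℂ := A.map (Complex.ofReal ·) with hM
  -- lam is an eigenvalue of M, hence real
  have hwM : Matrix.vecMul w (algebraMap ℂ (Matrix (Fin n) (Fin n) ℂ) lam - M) = 0 := by
    rw [Algebra.algebraMap_eq_smul_one, Matrix.vecMul_sub, heig]
    have h1 : Matrix.vecMul w (lam • (1 : Matrix (Fin n) (Fin n) ℂ)) = lam • w := by
      funext v
      simp [Matrix.vecMul, dotProduct, Matrix.smul_apply, Matrix.one_apply,
        mul_ite, mul_zero, mul_one, Finset.sum_ite_eq', mul_comm]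
    rw [h1, sub_self]
  have hdet : (algebraMap ℂ (Matrix (Fin n) (Fin n) ℂ) lam - M).det = 0 :=
    Matrix.exists_vecMul_eq_zero_iff.mp ⟨w, hw, hwM⟩
  have hspec : lam ∈ spectrum ℂ M := by
    rw [spectrum.mem_iff]
    intro hUnit
    rw [Matrix.isUnit_iff_isUnit_det, hdet] at hUnit
    exact hUnit.ne_zero rfl
  have him : lam.im = 0 := hreal lam hspec
  -- componentwise eigen-equation
  have hcomp : ∀ v, ∑ u, w u * ((A u v : ℝ) : ℂ) = lam * w v := by
    intro v
    have h1 := congrFun heig v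
    simpa [Matrix.vecMul, dotProduct, Matrix.map_apply, Pi.smul_apply,
      smul_eq_mul, hM] using h1
  set x : Fin n → ℝ := fun i => (w i).re with hxdef
  set y : Fin n → ℝ := fun i => (w i).im with hydef
  have hxA : ∀ v, ∑ u, x u * A u v = lam.re * x v := by
    intro v
    have h2 := congrArg Complex.re (hcomp v)
    rw [Complex.re_sum] at h2
    simpa [Complex.mul_re, him] using h2
  have hyA : ∀ v, ∑ u, y u * A u v = lam.re * y v := by
    intro v
    have h2 := congrArg Complex.im (hcomp v)
    rw [Complex.im_sum] at h2
    simpa [Complex.mul_im, him] using h2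
  set Bm : Matrix (Fin n) (Fin n) ℝ := A - lam.re • (1 : Matrix (Fin n) (Fin n) ℝ) with hBm
  have hvec : ∀ (z : Fin n → ℝ), (∀ v, ∑ u, z u * A u v = lam.re * z v) →
      Matrix.vecMul z Bm = 0 := by
    intro z hz
    funext v
    rw [show Matrix.vecMul z Bm v = ∑ u, z u * Bm u v from by
      simp [Matrix.vecMul, dotProduct]]
    have hcalc : ∑ u, z u * Bm u v
        = (∑ u, z u * A u v) - ∑ u, (if u = v then lam.re * z u else 0) := by
      rw [← Finset.sum_sub_distrib]
      apply Finset.sum_congr rfl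
      intro u _
      by_cases h : u = v
      · subst h
        rw [if_pos rfl]
        simp only [hBm, Matrix.sub_apply, Matrix.smul_apply, Matrix.one_apply_eq,
          smul_eq_mul, mul_one]
        ring
      · simp only [hBm, Matrix.sub_apply, Matrix.smul_apply, Matrix.one_apply_ne h,
          smul_eq_mul, mul_zero, sub_zero, if_neg h]
    rw [hcalc, Finset.sum_ite_eq' Finset.univ v (fun u => lam.re * z u), hz v]
    simp
  have hxB : Matrix.vecMul x Bm = 0 := hvec x hxA
  have hyB : Matrix.vecMul y Bm = 0 := hvec y hyA
  have hxVC : ∀ j ∈ VC, x j = 0 := fun j hj => by simp [hxdef, hcon j hj]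
  have hyVC : ∀ j ∈ VC, y j = 0 := fun j hj => by simp [hydef, hcon j hj]
  have key : ∀ (P' : Fin n → Fin n → SignPatEntry),
      (∀ i j : Fin n, i ≠ j → P' i j ≠ SignPatEntry.unk) → SignedZFS P' VC →
      (∀ i j, matchesSign (P' i j) (Bm i j)) → False := by
    intro P' hP' hZ hBmatch
    have hx0 := Stmt6Aux.zfs_zero P' hP' Bm hBmatch VC hZ x hxB hxVC
    have hy0 := Stmt6Aux.zfs_zero P' hP' Bm hBmatch VC hZ y hyB hyVC
    apply hw
    funext i
    have h1 : (w i).re = 0 := congrFun hx0 i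
    have h2 : (w i).im = 0 := congrFun hy0 i
    exact Complex.ext (by simpa using h1) (by simpa using h2)
  rcases lt_trichotomy lam.re 0 with h | h | h
  · exact key (posLooped P) (Stmt6Aux.posLooped_offdiag P hP) hVCneg
      (Stmt6Aux.residual_match_pos P A hA lam.re h)
  · exact key P hP hVC0 (Stmt6Aux.residual_match_zero P A hA lam.re h)
  · exact key (negLooped P) (Stmt6Aux.negLooped_offdiag P hP) hVCpos
      (Stmt6Aux.residual_match_neg P A hA lam.re h)

/-- If `V_C` is simultaneously a signed, a positive signed, and a negative
signed zero forcing set of `P_s`, and `A ∈ Q_s(P_s)` has only real (complex) eigenvalues,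
then every complex left eigenvector of `A` has a nonzero coordinate in `V_C`; by the PBH
test the pair `(A, B)` with control nodes `V_C` is controllable. -/
theorem stmt6 {n : ℕ} (P : Fin n → Fin n → SignPatEntry)
    (hP : ∀ i j : Fin n, i ≠ j → P i j ≠ SignPatEntry.unk)
    (VC : Finset (Fin n))
    (hVC0 : SignedZFS P VC)
    (hVCpos : SignedZFS (negLooped P) VC)
    (hVCneg : SignedZFS (posLooped P) VC)
    (A : Matrix (Fin n) (Fin n) ℝ) (hA : QClass P A)
    (hreal : ∀ μ ∈ spectrum ℂ (A.map (Complex.ofReal ·)), μ.im = 0) :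
    ∀ (lam : ℂ) (w : Fin n → ℂ), w ≠ 0 →
      Matrix.vecMul w (A.map (Complex.ofReal ·)) = lam • w →
      ∃ j ∈ VC, w j ≠ 0 := by
  exact stmt6' P hP VC hVC0 hVCpos hVCneg A hA hreal
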